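/- arXiv:1210.5764 — 9 statements merged into one kernel-verified Lean document; each statement's English description precedes it below -/
import Mathlib

section
/- In a commutative ring R with identity, the set R_K(M) of all elements a ∈ R such that the closure of D(a) = {P ∈ Min(R) : a ∉ P} in the Zariski topology on the minimal prime spectrum Min(R) is compact, forms an ideal of R. -/
/-- The minimal prime spectrum of `R`, with the subspace (Zariski) topology. -/
abbrev MinSpec (R : Type*) [CommRing R] :=
  {P : PrimeSpectrum R // P.asIdeal ∈ minimalPrimes R}

/-- R_K(M) = {a : closure of D(a) is compact} forms an ideal of R. -/
theorem rk_is_ideal (R : Type*) [CommRing R] :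
    ∃ I : Ideal R, ∀ a : R,
      a ∈ I ↔ IsCompact (closure {P : MinSpec R | a ∉ P.1.asIdeal}) := by
  refine ⟨{ carrier := {a : R | IsCompact (closure {P : MinSpec R | a ∉ P.1.asIdeal})}
            zero_mem' := ?_
            add_mem' := ?_
            smul_mem' := ?_ }, fun a => Iff.rfl⟩
  · intro a b ha hb
    simp only [Set.mem_setOf_eq] at ha hb ⊢
    have hsub : {P : MinSpec R | a + b ∉ P.1.asIdeal} ⊆
        {P : MinSpec R | a ∉ P.1.asIdeal} ∪ {P : MinSpec R | b ∉ P.1.asIdeal} := by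
      intro P hP
      by_contra h
      simp only [Set.mem_union, Set.mem_setOf_eq, not_or, not_not] at h
      exact hP (P.1.asIdeal.add_mem h.1 h.2)
    have hcl : closure {P : MinSpec R | a + b ∉ P.1.asIdeal} ⊆
        closure {P : MinSpec R | a ∉ P.1.asIdeal} ∪
        closure {P : MinSpec R | b ∉ P.1.asIdeal} := by
      calc closure {P : MinSpec R | a + b ∉ P.1.asIdeal}
          ⊆ closure ({P : MinSpec R | a ∉ P.1.asIdeal} ∪
              {P : MinSpec R | b ∉ P.1.asIdeal}) := closure_mono hsub
        _ = _ := closure_union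
    exact (ha.union hb).of_isClosed_subset isClosed_closure hcl
  · have h : {P : MinSpec R | (0 : R) ∉ P.1.asIdeal} = ∅ := by
      ext P; simp [P.1.asIdeal.zero_mem]
    simp only [Set.mem_setOf_eq, h, closure_empty, isCompact_empty]
  · intro c a ha
    simp only [Set.mem_setOf_eq, smul_eq_mul] at ha ⊢
    have hsub : {P : MinSpec R | c * a ∉ P.1.asIdeal} ⊆
        {P : MinSpec R | a ∉ P.1.asIdeal} := fun P hP h =>
      hP (P.1.asIdeal.mul_mem_left c h)
    exact ha.of_isClosed_subset isClosed_closure (closure_mono hsub)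
end

section
/- In a commutative ring R with identity, the ideal R_K(M) is a z⁰-ideal: if a ∈ R_K(M), b ∈ R, and P_b ⊆ P_a (where P_x denotes the intersection of all minimal prime ideals containing x), then b ∈ R_K(M). -/
/-- R_K(M) is a z⁰-ideal: if P_b ⊆ P_a and a ∈ R_K(M) then b ∈ R_K(M). -/
theorem rk_is_z0_ideal (R : Type*) [CommRing R] (a b : R)
    (ha : IsCompact (closure {P : MinSpec R | a ∉ P.1.asIdeal}))
    (h : sInf {P : Ideal R | P ∈ minimalPrimes R ∧ b ∈ P} ≤
         sInf {P : Ideal R | P ∈ minimalPrimes R ∧ a ∈ P}) :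
    IsCompact (closure {P : MinSpec R | b ∉ P.1.asIdeal}) := by
  -- first: b is in every minimal prime containing a
  have hb : ∀ p : Ideal R, p ∈ minimalPrimes R → a ∈ p → b ∈ p := by
    intro p hp hap
    have hbmem : b ∈ sInf {P : Ideal R | P ∈ minimalPrimes R ∧ b ∈ P} :=
      Submodule.mem_sInf.mpr fun P hP => hP.2
    exact sInf_le (show p ∈ {P : Ideal R | P ∈ minimalPrimes R ∧ a ∈ P} from ⟨hp, hap⟩)
      (h hbmem)
  have key : {P : MinSpec R | b ∉ P.1.asIdeal} ⊆
      closure {P : MinSpec R | a ∉ P.1.asIdeal} := by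
    intro Q hQ
    rw [closure_subtype, ← PrimeSpectrum.zeroLocus_vanishingIdeal_eq_closure]
    intro x hx
    haveI hQp : Q.1.asIdeal.IsPrime := Q.2.1.1
    -- show x * b is in every minimal prime, hence nilpotent
    have hmin : ∀ p : Ideal R, p ∈ minimalPrimes R → x * b ∈ p := by
      intro p hp
      haveI : p.IsPrime := hp.1.1
      by_cases hap : a ∈ p
      · exact Ideal.mul_mem_left p x (hb p hp hap)
      · have : x ∈ p := by
          have := (PrimeSpectrum.mem_vanishingIdeal _ _).mp hx
            ⟨p, inferInstance⟩ ⟨⟨⟨p, inferInstance⟩, hp⟩, hap, rfl⟩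
          exact this
        exact Ideal.mul_mem_right b p this
    have hnil : x * b ∈ nilradical R := by
      rw [nilradical_eq_sInf, Submodule.mem_sInf]
      intro J hJ
      haveI : Ideal.IsPrime J := hJ
      obtain ⟨p, hp, hpJ⟩ := Ideal.exists_minimalPrimes_le (bot_le : ⊥ ≤ J)
      exact hpJ (hmin p hp)
    have hxbQ : x * b ∈ Q.1.asIdeal := nilradical_le_prime Q.1.asIdeal hnil
    rcases hQp.mem_or_mem hxbQ with hx' | hb'
    · exact hx'
    · exact absurd hb' hQ
  have : closure {P : MinSpec R | b ∉ P.1.asIdeal} ⊆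
      closure {P : MinSpec R | a ∉ P.1.asIdeal} :=
    closure_minimal key isClosed_closure
  exact ha.of_isClosed_subset isClosed_closure this
end

section
/- In a commutative reduced ring R, for finitely many elements f₁,...,fₙ ∈ R, the intersection V(f₁) ∩ ... ∩ V(fₙ) of their vanishing sets in the minimal prime spectrum is empty if and only if ann(f₁) ∩ ... ∩ ann(fₙ) = 0. -/
section IsReduced

variable {R : Type*} [CommRing R] [IsReduced R]

theorem exists_notMem_mul_eq_zero_of_mem_minimalPrimes {P : Ideal R} (hP : P ∈ minimalPrimes R)
    {f : R} (hf : f ∈ P) : ∃ s ∉ P, s * f = 0 := by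
  have := hP.1.1
  have := Ring.KrullDimLE.of_isLocalization P hP (Localization.AtPrime P)
  have hnil : IsNilpotent (algebraMap R (Localization.AtPrime P) f) :=
    Ring.KrullDimLE.isNilpotent_iff_mem_maximalIdeal.mpr
      ((IsLocalization.AtPrime.to_map_mem_maximal_iff _ P f).mpr hf)
  obtain ⟨⟨s, hs⟩, hsf⟩ := (IsLocalization.map_eq_zero_iff P.primeCompl _ f).mp hnil.eq_zero
  exact ⟨s, hs, hsf⟩

theorem exists_notMem_forall_mul_eq_zero_of_mem_minimalPrimes {ι : Type*} [Finite ι]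
    {P : Ideal R} (hP : P ∈ minimalPrimes R) {f : ι → R} (hf : ∀ i, f i ∈ P) :
    ∃ s ∉ P, ∀ i, s * f i = 0 := by
  have := Fintype.ofFinite ι
  choose s hs hsf using fun i ↦ exists_notMem_mul_eq_zero_of_mem_minimalPrimes hP (hf i)
  refine ⟨∏ i, s i, fun h ↦ ?_, fun i ↦ ?_⟩
  · obtain ⟨i, -, hi⟩ := hP.1.1.prod_mem_iff.mp h
    exact hs i hi
  · obtain ⟨c, hc⟩ := Finset.dvd_prod_of_mem s (Finset.mem_univ i)
    rw [hc, mul_right_comm, hsf i, zero_mul]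

theorem exists_mem_minimalPrimes_notMem {a : R} (ha : a ≠ 0) :
    ∃ P ∈ minimalPrimes R, a ∉ P := by
  have : a ∉ sInf (minimalPrimes R) := by
    rwa [minimalPrimes, Ideal.sInf_minimalPrimes, Ideal.radical_bot_of_isReduced]
  simpa only [Submodule.mem_sInf, not_forall, exists_prop] using this

end IsReduced

/-- ⋂ V(fᵢ) = ∅ iff ⋂ ann(fᵢ) = 0. -/
theorem inter_vanishing_empty_iff (R : Type*) [CommRing R] [IsReduced R]
    (n : ℕ) (f : Fin n → R) :
    (⋂ i, {P : MinSpec R | f i ∈ P.1.asIdeal}) = ∅ ↔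
      (⋂ i, {a : R | a * f i = 0}) = {0} := by
  simp only [Set.eq_empty_iff_forall_notMem, Set.eq_singleton_iff_unique_mem, Set.mem_iInter,
    Set.mem_ofPred_eq, zero_mul, implies_true, true_and, Subtype.forall]
  constructor
  · intro hV a ha
    by_contra ha0
    obtain ⟨P, hP, haP⟩ := exists_mem_minimalPrimes_notMem ha0
    exact hV ⟨P, hP.1.1⟩ hP fun i ↦ (hP.1.1.mem_or_mem (ha i ▸ P.zero_mem)).resolve_left haP
  · intro hann P hP hf
    obtain ⟨s, hsP, hs⟩ := exists_notMem_forall_mul_eq_zero_of_mem_minimalPrimes hP hf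
    exact hsP (hann s hs ▸ P.asIdeal.zero_mem)
end

section
/- Let R be a commutative reduced ring. A finitely generated ideal I ⊆ Z(R) is an sd-ideal if and only if it is a dense ideal (ann(I) = 0). -/
namespace Ideal

variable {R : Type*} [CommRing R] [IsReduced R]

theorem exists_notMem_mul_eq_zero_of_mem_minimalPrimes {P : Ideal R}
    (hP : P ∈ minimalPrimes R) {x : R} (hx : x ∈ P) : ∃ c ∉ P, c * x = 0 := by
  have := hP.isPrime
  let A := Localization.AtPrime P
  have hmax : IsLocalRing.maximalIdeal A = ⊥ := by
    have h := IsLocalization.AtPrime.radical_map_of_mem_minimalPrimes A P ⊥ hP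
    rwa [map_bot, show (⊥ : Ideal A).radical = ⊥ from nilradical_eq_zero A,
      Localization.AtPrime.map_eq_maximalIdeal, eq_comm] at h
  have hx0 : algebraMap R A x = 0 := by
    rw [← mem_bot, ← hmax, ← Localization.AtPrime.map_eq_maximalIdeal]
    exact mem_map_of_mem _ hx
  obtain ⟨c, hc⟩ := (IsLocalization.map_eq_zero_iff P.primeCompl A x).mp hx0
  exact ⟨c, c.2, hc⟩

theorem annihilator_not_le_of_fg_of_mem_minimalPrimes {I P : Ideal R} (hI : I.FG)
    (hP : P ∈ minimalPrimes R) (hIP : I ≤ P) : ¬ Submodule.annihilator I ≤ P := by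
  have := hP.isPrime
  induction I, hI using Submodule.fg_induction with
  | singleton x =>
    obtain ⟨c, hcP, hcx⟩ := exists_notMem_mul_eq_zero_of_mem_minimalPrimes hP
      (hIP (mem_span_singleton_self x))
    exact fun h => hcP (h ((Submodule.mem_annihilator_span_singleton x c).mpr hcx))
  | sup I J _ _ hI hJ =>
    rw [Submodule.annihilator_sup, this.inf_le]
    rintro (h | h)
    · exact hI (le_sup_left.trans hIP) h
    · exact hJ (le_sup_right.trans hIP) h

theorem exists_minimalPrimes_le_of_annihilator_ne_bot {I : Ideal R}
    (hI : Submodule.annihilator I ≠ ⊥) : ∃ P ∈ minimalPrimes R, I ≤ P := by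
  obtain ⟨a, ha, ha0⟩ := Submodule.exists_mem_ne_zero_of_ne_bot hI
  obtain ⟨P, hP, haP⟩ : ∃ P ∈ minimalPrimes R, a ∉ P := by
    have : a ∉ (⊥ : Ideal R).radical := fun h => ha0 (IsNilpotent.eq_zero (mem_nilradical.mp h))
    simpa [← Ideal.sInf_minimalPrimes] using this
  refine ⟨P, hP, fun x hx => (hP.isPrime.mem_or_mem ?_).resolve_left haP⟩
  rw [← smul_eq_mul, Submodule.mem_annihilator.mp ha x hx]
  exact P.zero_mem

end Ideal

theorem fg_sd_iff_dense_general (R : Type*) [CommRing R] [IsReduced R] (I : Ideal R)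
    (hfg : I.FG) :
    (∀ P ∈ minimalPrimes R, ¬ I ≤ P) ↔
      (∀ a : R, (∀ x ∈ I, a * x = 0) → a = 0) := by
  have hdense : (∀ a : R, (∀ x ∈ I, a * x = 0) → a = 0) ↔ Submodule.annihilator I = ⊥ := by
    simp only [Submodule.eq_bot_iff, Submodule.mem_annihilator, smul_eq_mul]
  rw [hdense]
  constructor
  · intro hsd
    by_contra hne
    obtain ⟨P, hP, hIP⟩ := Ideal.exists_minimalPrimes_le_of_annihilator_ne_bot hne
    exact hsd P hP hIP
  · intro hann P hP hIP
    exact Ideal.annihilator_not_le_of_fg_of_mem_minimalPrimes hfg hP hIP (hann ▸ bot_le)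

/-- A f.g. ideal of zero divisors is an sd-ideal iff it is dense. -/
theorem fg_sd_iff_dense (R : Type*) [CommRing R] [IsReduced R] (I : Ideal R)
    (hfg : I.FG) (hZ : ∀ x ∈ I, x ∉ nonZeroDivisors R) :
    (∀ P ∈ minimalPrimes R, ¬ I ≤ P) ↔
      (∀ a : R, (∀ x ∈ I, a * x = 0) → a = 0) :=
  fg_sd_iff_dense_general R I hfg
end

section
/- If a commutative reduced ring R has only finitely many minimal prime ideals, then R has no sd-ideal. -/
/-! In a reduced ring the zero divisors are exactly the union of the minimal primes. If there are
only finitely many of them, prime avoidance puts any ideal of zero divisors inside one of them. -/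

theorem compl_nonZeroDivisors_eq_iUnion_minimalPrimes (R : Type*) [CommSemiring R] [IsReduced R] :
    (nonZeroDivisors R : Set R)ᶜ = ⋃ p ∈ minimalPrimes R, (p : Set R) := by
  have hunion := Ideal.iUnion_minimalPrimes (I := (⊥ : Ideal R))
  rw [Ideal.radical_bot_of_isReduced] at hunion
  refine Eq.trans ?_ hunion.symm
  ext x
  simp only [Set.mem_compl_iff, SetLike.mem_coe, mem_nonZeroDivisors_iff_right, not_forall,
    exists_prop, Ideal.mem_bot, Set.mem_ofPred_eq]
  exact exists_congr fun y ↦ by rw [mul_comm, and_comm]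

theorem exists_minimalPrimes_le_of_subset_compl_nonZeroDivisors {R : Type*} [CommRing R]
    [IsReduced R] (h : (minimalPrimes R).Finite) {I : Ideal R}
    (hI : (I : Set R) ⊆ (nonZeroDivisors R : Set R)ᶜ) : ∃ p ∈ minimalPrimes R, I ≤ p := by
  rw [compl_nonZeroDivisors_eq_iUnion_minimalPrimes] at hI
  exact (Ideal.subset_union_prime_finite h (f := id) ⊥ ⊥ fun p hp _ _ ↦ hp.isPrime).mp hI

/-- A reduced ring with finitely many minimal primes has no sd-ideal. -/
theorem no_sd_of_finitely_many_min_primes (R : Type*) [CommRing R] [IsReduced R]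
    (h : (minimalPrimes R).Finite) :
    ¬ ∃ I : Ideal R, (∀ x ∈ I, x ∉ nonZeroDivisors R) ∧
      ∀ P ∈ minimalPrimes R, ¬ I ≤ P := by
  rintro ⟨I, hI, hmin⟩
  obtain ⟨p, hp, hIp⟩ := exists_minimalPrimes_le_of_subset_compl_nonZeroDivisors h hI
  exact hmin p hp hIp
end

section
/- Let R be a commutative reduced ring. Then R_K(M) is an sd-ideal if and only if Min(R) with the Zariski topology is locally compact and not compact. -/
open TopologicalSpace
open scoped nonZeroDivisors

theorem Ideal.exists_notMem_isNilpotent_mul_of_mem_minimalPrimes {R : Type*} [CommSemiring R]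
    {P : Ideal R} (hP : P ∈ minimalPrimes R) {x : R} (hx : x ∈ P) :
    ∃ y ∉ P, IsNilpotent (x * y) := by
  have := hP.isPrime
  have := Ring.KrullDimLE.of_isLocalization P hP (Localization.AtPrime P)
  obtain ⟨n, hn⟩ := Ring.KrullDimLE.isNilpotent_iff_mem_maximalIdeal.mpr
    ((IsLocalization.AtPrime.to_map_mem_maximal_iff (Localization.AtPrime P) P x).mpr hx)
  rw [← map_pow, IsLocalization.map_eq_zero_iff P.primeCompl] at hn
  obtain ⟨y, hyx⟩ := hn
  refine ⟨y, y.2, n + 1, ?_⟩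
  rw [show (x * y) ^ (n + 1) = y * x ^ n * (x * y ^ n) by ring, hyx, zero_mul]

theorem TopologicalSpace.IsTopologicalBasis.weaklyLocallyCompactSpace_iff {X : Type*}
    [TopologicalSpace X] {B : Set (Set X)} (hB : IsTopologicalBasis B)
    (hB_closed : ∀ s ∈ B, IsClosed s) :
    WeaklyLocallyCompactSpace X ↔ ∀ x, ∃ s ∈ B, IsCompact s ∧ x ∈ s := by
  refine ⟨fun _ x ↦ ?_, fun h ↦ ⟨fun x ↦ ?_⟩⟩
  · obtain ⟨K, hK, hKx⟩ := exists_compact_mem_nhds x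
    obtain ⟨s, hsB, hxs, hsK⟩ := hB.mem_nhds_iff.mp hKx
    exact ⟨s, hsB, hK.of_isClosed_subset (hB_closed s hsB) hsK, hxs⟩
  · obtain ⟨s, hsB, hs, hxs⟩ := h x
    exact ⟨s, hs, (hB.isOpen hsB).mem_nhds hxs⟩

namespace MinSpec

variable {R : Type*} [CommRing R]

theorem isClopen_setOf_notMem (a : R) : IsClopen {Q : MinSpec R | a ∉ Q.1.asIdeal} := by
  refine ⟨?_, (PrimeSpectrum.isOpen_basicOpen (a := a)).preimage continuous_subtype_val⟩
  have hcompl : {Q : MinSpec R | a ∉ Q.1.asIdeal}ᶜ =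
      ⋃ y ∈ {y : R | IsNilpotent (a * y)}, {Q : MinSpec R | y ∉ Q.1.asIdeal} := by
    ext Q
    simp only [Set.mem_compl_iff, Set.mem_ofPred_eq, not_not, Set.mem_iUnion, exists_prop]
    refine ⟨fun ha ↦ ?_, fun ⟨y, hay, hy⟩ ↦ ?_⟩
    · obtain ⟨y, hy, hay⟩ := Ideal.exists_notMem_isNilpotent_mul_of_mem_minimalPrimes Q.2 ha
      exact ⟨y, hay, hy⟩
    · exact (Q.1.2.mem_or_mem (nilpotent_iff_mem_prime.mp hay _ Q.1.2)).resolve_right hy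
  exact isOpen_compl_iff.mp (hcompl ▸ isOpen_biUnion fun y _ ↦
    (PrimeSpectrum.isOpen_basicOpen (a := y)).preimage continuous_subtype_val)

theorem isTopologicalBasis_setOf_notMem :
    IsTopologicalBasis (Set.range fun a : R ↦ {Q : MinSpec R | a ∉ Q.1.asIdeal}) := by
  have := PrimeSpectrum.isTopologicalBasis_basic_opens.isInducing
    (Topology.IsInducing.subtypeVal (t := {P : PrimeSpectrum R | P.asIdeal ∈ minimalPrimes R}))
  rwa [← Set.range_comp] at this

theorem weaklyLocallyCompactSpace_iff :
    WeaklyLocallyCompactSpace (MinSpec R) ↔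
      ∀ P ∈ minimalPrimes R, ∃ a, IsCompact {Q : MinSpec R | a ∉ Q.1.asIdeal} ∧ a ∉ P := by
  rw [isTopologicalBasis_setOf_notMem.weaklyLocallyCompactSpace_iff
    (Set.forall_mem_range.mpr fun a ↦ (isClopen_setOf_notMem a).isClosed)]
  simp only [Set.exists_range_iff, Subtype.forall]
  exact ⟨fun h P hP ↦ h ⟨P, hP.isPrime⟩ hP, fun h x hx ↦ h x.asIdeal hx⟩

theorem setOf_notMem_eq_univ_of_mem_nonZeroDivisors {a : R} (ha : a ∈ R⁰) :
    {Q : MinSpec R | a ∉ Q.1.asIdeal} = Set.univ :=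
  Set.eq_univ_of_forall fun Q haQ ↦ notMem_nonZeroDivisors_of_mem_mem_minimalPrimes haQ Q.2 ha

theorem not_compactSpace_iff :
    ¬ CompactSpace (MinSpec R) ↔
      ∀ a : R, IsCompact {Q : MinSpec R | a ∉ Q.1.asIdeal} → a ∉ R⁰ := by
  rw [← isCompact_univ_iff]
  refine ⟨fun h a ha haR ↦ h (setOf_notMem_eq_univ_of_mem_nonZeroDivisors haR ▸ ha),
    fun h hcomp ↦ h 1 ?_ (one_mem R⁰)⟩
  rwa [setOf_notMem_eq_univ_of_mem_nonZeroDivisors (one_mem R⁰)]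

end MinSpec

theorem rk_sd_iff_locally_compact_noncompact_general (R : Type*) [CommRing R] :
    ((∀ a : R, IsCompact (closure {P : MinSpec R | a ∉ P.1.asIdeal}) →
        a ∉ nonZeroDivisors R) ∧
      ∀ P ∈ minimalPrimes R,
        ¬ {a : R | IsCompact (closure {Q : MinSpec R | a ∉ Q.1.asIdeal})} ⊆ (P : Set R)) ↔
    (WeaklyLocallyCompactSpace (MinSpec R) ∧ ¬ CompactSpace (MinSpec R)) := by
  simp only [(MinSpec.isClopen_setOf_notMem _).isClosed.closure_eq, Set.not_subset]
  exact and_comm.trans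
    (MinSpec.weaklyLocallyCompactSpace_iff.symm.and MinSpec.not_compactSpace_iff.symm)

/-- R_K(M) is an sd-ideal iff Min(R) is locally compact and non-compact. -/
theorem rk_sd_iff_locally_compact_noncompact (R : Type*) [CommRing R] [IsReduced R] :
    ((∀ a : R, IsCompact (closure {P : MinSpec R | a ∉ P.1.asIdeal}) →
        a ∉ nonZeroDivisors R) ∧
      ∀ P ∈ minimalPrimes R,
        ¬ {a : R | IsCompact (closure {Q : MinSpec R | a ∉ Q.1.asIdeal})} ⊆ (P : Set R)) ↔
    (WeaklyLocallyCompactSpace (MinSpec R) ∧ ¬ CompactSpace (MinSpec R)) :=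
  rk_sd_iff_locally_compact_noncompact_general R
end

section
/- Let R be a commutative reduced ring. Then R_K(M) is an essential ideal of R if and only if Min(R) with the Zariski topology is almost locally compact (every nonempty open set contains a nonempty open set with compact closure). -/
lemma minspec_exists_not_mem {R : Type*} [CommRing R] [IsReduced R] {x : R} (hx : x ≠ 0) :
    ∃ P : MinSpec R, x ∉ P.1.asIdeal := by
  by_contra h
  push_neg at h
  apply hx
  have hmem : x ∈ sInf (minimalPrimes R) := by
    rw [Submodule.mem_sInf]
    intro I hI
    exact h ⟨⟨I, hI.1.1⟩, hI⟩
  have : sInf (minimalPrimes R) = (⊥ : Ideal R) := by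
    have := Ideal.sInf_minimalPrimes (I := (⊥ : Ideal R))
    rw [minimalPrimes, this]
    simpa [nilradical] using (nilradical_eq_zero R)
  rw [this] at hmem
  exact hmem

lemma minspec_basic {R : Type*} [CommRing R] {U : Set (MinSpec R)} (hU : IsOpen U)
    {P : MinSpec R} (hP : P ∈ U) :
    ∃ a : R, a ∉ P.1.asIdeal ∧ {Q : MinSpec R | a ∉ Q.1.asIdeal} ⊆ U := by
  obtain ⟨W, hW, rfl⟩ := isOpen_induced_iff.mp hU
  have hPW : (P.1 : PrimeSpectrum R) ∈ W := hP
  obtain ⟨t, ⟨a, rfl⟩, hPt, htW⟩ :=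
    PrimeSpectrum.isTopologicalBasis_basic_opens.exists_subset_of_mem_open hPW hW
  refine ⟨a, hPt, fun Q hQ => htW hQ⟩

lemma minspec_basic_isOpen {R : Type*} [CommRing R] (a : R) :
    IsOpen {Q : MinSpec R | a ∉ Q.1.asIdeal} := by
  have : {Q : MinSpec R | a ∉ Q.1.asIdeal} =
      Subtype.val ⁻¹' (PrimeSpectrum.basicOpen a : Set (PrimeSpectrum R)) := rfl
  rw [this]
  exact (PrimeSpectrum.basicOpen a).2.preimage continuous_subtype_val

/-- R_K(M) is an essential ideal iff Min(R) is almost locally compact. -/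
theorem rk_essential_iff_almost_locally_compact (R : Type*) [CommRing R] [IsReduced R] :
    (∀ J : Ideal R, J ≠ ⊥ →
        ∃ x ∈ J, x ≠ 0 ∧ IsCompact (closure {P : MinSpec R | x ∉ P.1.asIdeal})) ↔
    (∀ U : Set (MinSpec R), IsOpen U → U ≠ ∅ →
        ∃ V : Set (MinSpec R), IsOpen V ∧ V ≠ ∅ ∧ V ⊆ U ∧ IsCompact (closure V)) := by
  constructor
  · intro h U hU hUne
    obtain ⟨P, hP⟩ := Set.nonempty_iff_ne_empty.mpr hUne
    obtain ⟨a, haP, haU⟩ := minspec_basic hU hP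
    have ha0 : a ≠ 0 := fun h0 => haP (h0 ▸ P.1.asIdeal.zero_mem)
    have hspan : Ideal.span {a} ≠ ⊥ := by
      simp [Ideal.span_singleton_eq_bot, ha0]
    obtain ⟨x, hxJ, hx0, hxc⟩ := h (Ideal.span {a}) hspan
    refine ⟨{Q : MinSpec R | x ∉ Q.1.asIdeal}, minspec_basic_isOpen x, ?_, ?_, hxc⟩
    · obtain ⟨Q, hQ⟩ := minspec_exists_not_mem hx0
      exact Set.nonempty_iff_ne_empty.mp ⟨Q, hQ⟩
    · intro Q hQ
      apply haU
      intro haQ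
      exact hQ ((Ideal.span_singleton_le_iff_mem _).mpr haQ hxJ)
  · intro h J hJ
    have : ∃ a ∈ J, a ≠ 0 := by
      by_contra hc
      push_neg at hc
      exact hJ ((Submodule.eq_bot_iff J).mpr hc)
    obtain ⟨a, haJ, ha0⟩ := this
    obtain ⟨V, hVo, hVne, hVU, hVc⟩ := h {Q : MinSpec R | a ∉ Q.1.asIdeal}
      (minspec_basic_isOpen a)
      (Set.nonempty_iff_ne_empty.mp (minspec_exists_not_mem ha0))
    obtain ⟨P, hP⟩ := Set.nonempty_iff_ne_empty.mpr hVne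
    obtain ⟨b, hbP, hbV⟩ := minspec_basic hVo hP
    refine ⟨a * b, J.mul_mem_right b haJ, ?_, ?_⟩
    · intro h0
      have hm : a * b ∈ P.1.asIdeal := h0 ▸ P.1.asIdeal.zero_mem
      exact (P.1.2.mem_or_mem hm).elim (fun ha => hVU hP ha) hbP
    · have heq : {Q : MinSpec R | a * b ∉ Q.1.asIdeal} = {Q : MinSpec R | b ∉ Q.1.asIdeal} := by
        ext Q
        simp only [Set.mem_setOf_eq]
        constructor
        · intro hab hb
          exact hab (Q.1.asIdeal.mul_mem_left a hb)
        · intro hb hab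
          exact (Q.1.2.mem_or_mem hab).elim (fun ha => hVU (hbV hb) ha) hb
      rw [heq]
      exact hVc.of_isClosed_subset isClosed_closure (closure_mono hbV)
end

section
/- In a commutative reduced ring R, a nonzero ideal I is essential if and only if the interior of V(I) in Min(R) (Zariski topology) is empty. -/
/-!
Both sides are equivalent to `ann I = 0`. In a reduced ring `I ∩ ann I = 0`, while `I ∩ J = 0`
forces `J ⊆ ann I`; so `I` is essential iff `ann I = 0`. On the other side, the minimal primes of
a reduced ring intersect to `0`. Hence `D(a) ∩ Min R` is nonempty iff `a ≠ 0`, and it lies in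
`V(I)` iff `a * i` lies in every minimal prime for `i ∈ I`, i.e. iff `a ∈ ann I`. As these sets
form a basis of `Min R`, the interior of `V(I)` is nonempty iff `ann I ≠ 0`.
-/

section

variable {R : Type*} [CommRing R]

namespace MinSpec

def basicOpen (a : R) : Set (MinSpec R) :=
  Subtype.val ⁻¹' (PrimeSpectrum.basicOpen a : Set (PrimeSpectrum R))

@[simp]
theorem mem_basicOpen {a : R} {P : MinSpec R} : P ∈ basicOpen a ↔ a ∉ P.1.asIdeal := Iff.rfl

theorem isTopologicalBasis_basicOpen :
    TopologicalSpace.IsTopologicalBasis (Set.range (basicOpen (R := R))) := by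
  have := PrimeSpectrum.isTopologicalBasis_basic_opens.isInducing
    (f := (Subtype.val : MinSpec R → PrimeSpectrum R)) Topology.IsInducing.subtypeVal
  rwa [← Set.range_comp] at this

end MinSpec

variable [IsReduced R]

theorem eq_zero_of_forall_mem_minimalPrimes {x : R} (h : ∀ P ∈ minimalPrimes R, x ∈ P) :
    x = 0 := by
  have hx : x ∈ sInf (minimalPrimes R) := Submodule.mem_sInf.mpr h
  rwa [minimalPrimes, Ideal.sInf_minimalPrimes, ← Ideal.zero_eq_bot, ← nilradical,
    nilradical_eq_zero] at hx

namespace Ideal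

theorem inf_annihilator_eq_bot (I : Ideal R) : I ⊓ I.annihilator = ⊥ := by
  refine eq_bot_iff.mpr fun y ⟨hyI, hyAnn⟩ => ?_
  have hyy : y * y = 0 := Submodule.mem_annihilator.mp hyAnn y hyI
  exact IsReduced.eq_zero y ⟨2, by rwa [pow_two]⟩

theorem essential_iff_annihilator_eq_bot (I : Ideal R) :
    (∀ J : Ideal R, J ≠ ⊥ → I ⊓ J ≠ ⊥) ↔ I.annihilator = ⊥ := by
  refine ⟨fun hess => by_contra fun h => hess _ h I.inf_annihilator_eq_bot, fun h J hJ hIJ => ?_⟩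
  refine hJ (eq_bot_iff.mpr (h ▸ Submodule.le_annihilator_iff.mpr ?_))
  rw [smul_eq_mul, ← le_bot_iff, ← hIJ, inf_comm]
  exact mul_le_inf

end Ideal

namespace MinSpec

theorem basicOpen_nonempty_iff {a : R} : (basicOpen a).Nonempty ↔ a ≠ 0 := by
  refine ⟨fun ⟨P, hP⟩ ha => hP (ha ▸ P.1.asIdeal.zero_mem), fun ha => ?_⟩
  obtain ⟨P, hP, haP⟩ : ∃ P ∈ minimalPrimes R, a ∉ P := by
    by_contra! h
    exact ha (eq_zero_of_forall_mem_minimalPrimes h)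
  exact ⟨⟨⟨P, hP.1.1⟩, hP⟩, haP⟩

theorem basicOpen_subset_setOf_le_iff {a : R} {I : Ideal R} :
    basicOpen a ⊆ {P : MinSpec R | I ≤ P.1.asIdeal} ↔ a ∈ I.annihilator := by
  simp only [Set.subset_def, mem_basicOpen, Set.mem_ofPred_eq, Submodule.mem_annihilator,
    smul_eq_mul]
  constructor
  · intro h i hi
    refine eq_zero_of_forall_mem_minimalPrimes fun P hP => ?_
    by_cases haP : a ∈ P
    · exact P.mul_mem_right i haP
    · exact P.mul_mem_left a (h ⟨⟨P, hP.1.1⟩, hP⟩ haP hi)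
  · intro h P haP i hi
    exact (P.1.isPrime.mem_or_mem (h i hi ▸ P.1.asIdeal.zero_mem)).resolve_left haP

theorem interior_setOf_le_eq_empty_iff (I : Ideal R) :
    interior {P : MinSpec R | I ≤ P.1.asIdeal} = ∅ ↔ I.annihilator = ⊥ := by
  rw [← Set.not_nonempty_iff_eq_empty, ← not_iff_not, not_not, ← ne_eq, Submodule.ne_bot_iff]
  constructor
  · intro hne
    obtain ⟨_, ⟨a, rfl⟩, hne, hsub⟩ :=
      isTopologicalBasis_basicOpen.exists_nonempty_subset hne isOpen_interior
    exact ⟨a, basicOpen_subset_setOf_le_iff.mp (hsub.trans interior_subset),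
      basicOpen_nonempty_iff.mp hne⟩
  · rintro ⟨a, ha, ha0⟩
    exact (basicOpen_nonempty_iff.mpr ha0).mono <| interior_maximal
      (basicOpen_subset_setOf_le_iff.mpr ha) (isTopologicalBasis_basicOpen.isOpen ⟨a, rfl⟩)

end MinSpec

end

theorem essential_iff_interior_vanishing_empty_general (R : Type*) [CommRing R] [IsReduced R]
    (I : Ideal R) :
    (∀ J : Ideal R, J ≠ ⊥ → I ⊓ J ≠ ⊥) ↔
      interior {P : MinSpec R | I ≤ P.1.asIdeal} = ∅ := by
  rw [I.essential_iff_annihilator_eq_bot, MinSpec.interior_setOf_le_eq_empty_iff]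

/-- A nonzero ideal is essential iff the interior of V(I) in Min(R) is empty. -/
theorem essential_iff_interior_vanishing_empty (R : Type*) [CommRing R] [IsReduced R]
    (I : Ideal R) (hI : I ≠ ⊥) :
    (∀ J : Ideal R, J ≠ ⊥ → I ⊓ J ≠ ⊥) ↔
      interior {P : MinSpec R | I ≤ P.1.asIdeal} = ∅ :=
  essential_iff_interior_vanishing_empty_general R I
end

section
/- Let R be a commutative reduced ring. Every intersection of essential minimal prime ideals of R is an essential ideal if and only if the set of isolated points of Min(R) is dense in Min(R). -/
section Aux

variable {R : Type*} [CommRing R]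

lemma sInf_minPrimes_eq_bot [IsReduced R] : sInf (minimalPrimes R) = ⊥ := by
  have h := Ideal.sInf_minimalPrimes (I := (⊥ : Ideal R))
  have h2 : (⊥ : Ideal R).radical = nilradical R := rfl
  rw [h2, nilradical_eq_zero R] at h
  exact h

lemma eq_zero_of_forall_minPrime [IsReduced R] {x : R}
    (h : ∀ P ∈ minimalPrimes R, x ∈ P) : x = 0 := by
  have : x ∈ sInf (minimalPrimes R) := Ideal.mem_sInf.mpr fun {I} hI => h I hI
  rwa [sInf_minPrimes_eq_bot, Ideal.mem_bot] at this

lemma minspec_ext {Q Q' : MinSpec R} (h : Q.1.asIdeal = Q'.1.asIdeal) : Q = Q' :=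
  Subtype.ext (PrimeSpectrum.ext h)

lemma isolated_iff (Q : MinSpec R) :
    IsOpen ({Q} : Set (MinSpec R)) ↔
      ∃ b, b ∉ Q.1.asIdeal ∧ ∀ Q' : MinSpec R, b ∉ Q'.1.asIdeal → Q' = Q := by
  constructor
  · intro hQ
    obtain ⟨V, hVopen, hVQ⟩ := isOpen_induced_iff.mp hQ
    have hQV : Q.1 ∈ V := by
      have : Q ∈ (Subtype.val ⁻¹' V : Set (MinSpec R)) := by rw [hVQ]; rfl
      exact this
    obtain ⟨v, ⟨b, rfl⟩, hQv, hvV⟩ :=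
      PrimeSpectrum.isTopologicalBasis_basic_opens.exists_subset_of_mem_open hQV hVopen
    refine ⟨b, (PrimeSpectrum.mem_basicOpen b Q.1).mp hQv, fun Q' hb' => ?_⟩
    have : Q' ∈ (Subtype.val ⁻¹' V : Set (MinSpec R)) :=
      hvV ((PrimeSpectrum.mem_basicOpen b Q'.1).mpr hb')
    rw [hVQ] at this
    exact this
  · rintro ⟨b, hbQ, hb⟩
    have : ({Q} : Set (MinSpec R)) =
        Subtype.val ⁻¹' (PrimeSpectrum.basicOpen b : Set (PrimeSpectrum R)) := by
      ext Q'
      simp only [Set.mem_singleton_iff, Set.mem_preimage, SetLike.mem_coe,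
        PrimeSpectrum.mem_basicOpen]
      constructor
      · rintro rfl; exact hbQ
      · exact fun h => hb Q' h
    rw [this]
    exact PrimeSpectrum.isOpen_basicOpen.preimage continuous_subtype_val

end Aux

/-- Every intersection of essential minimal primes is essential iff
the isolated points of Min(R) are dense. -/
theorem every_inter_essential_iff_isolated_dense (R : Type*) [CommRing R] [IsReduced R] :
    (∀ S : Set (Ideal R),
        (∀ P ∈ S, P ∈ minimalPrimes R ∧ ∀ J : Ideal R, J ≠ ⊥ → P ⊓ J ≠ ⊥) →
        ∀ J : Ideal R, J ≠ ⊥ → sInf S ⊓ J ≠ ⊥) ↔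
    Dense {Q : MinSpec R | IsOpen ({Q} : Set (MinSpec R))} := by
  constructor
  · -- forward
    intro h
    by_contra hnd
    rw [dense_iff_inter_open] at hnd
    push_neg at hnd
    obtain ⟨U, hUopen, hUne, hUiso⟩ := hnd
    obtain ⟨V, hVopen, hVU⟩ := isOpen_induced_iff.mp hUopen
    obtain ⟨Q0, hQ0U⟩ := hUne
    have hQ0V : Q0.1 ∈ V := by rw [← hVU] at hQ0U; exact hQ0U
    obtain ⟨v, ⟨a, rfl⟩, hQ0v, hvV⟩ :=
      PrimeSpectrum.isTopologicalBasis_basic_opens.exists_subset_of_mem_open hQ0V hVopen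
    have ha0 : a ∉ Q0.1.asIdeal := (PrimeSpectrum.mem_basicOpen a Q0.1).mp hQ0v
    set S : Set (Ideal R) :=
      {P | ∃ Q : MinSpec R, ¬ IsOpen ({Q} : Set (MinSpec R)) ∧ Q.1.asIdeal = P} with hSdef
    have hS : ∀ P ∈ S, P ∈ minimalPrimes R ∧ ∀ J : Ideal R, J ≠ ⊥ → P ⊓ J ≠ ⊥ := by
      rintro P ⟨Q, hQnot, rfl⟩
      refine ⟨Q.2, fun J hJ hPJ => hQnot ?_⟩
      obtain ⟨b, hbJ, hb0⟩ := Submodule.ne_bot_iff J |>.mp hJ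
      refine (isolated_iff Q).mpr ⟨b, ?_, ?_⟩
      · intro hbQ
        have : b ∈ Q.1.asIdeal ⊓ J := ⟨hbQ, hbJ⟩
        rw [hPJ] at this
        exact hb0 this
      · intro Q' hbQ'
        have hle : Q.1.asIdeal ≤ Q'.1.asIdeal := by
          intro x hx
          have hxb : x * b ∈ Q.1.asIdeal ⊓ J :=
            ⟨Ideal.mul_mem_right b _ hx, Ideal.mul_mem_left J x hbJ⟩
          rw [hPJ] at hxb
          have : x * b ∈ Q'.1.asIdeal := by rw [Ideal.mem_bot.mp hxb]; exact zero_mem _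
          rcases Q'.1.2.mem_or_mem this with h | h
          · exact h
          · exact absurd h hbQ'
        have hge := Q'.2.2 ⟨Q.1.2, bot_le⟩ hle
        exact minspec_ext (le_antisymm hge hle)
    have haz : a ≠ 0 := fun h => ha0 (h ▸ Q0.1.asIdeal.zero_mem)
    have hJ' : Ideal.span {a} ≠ (⊥ : Ideal R) := by
      simpa [Ideal.span_singleton_eq_bot] using haz
    refine h S hS (Ideal.span {a}) hJ' ?_
    rw [eq_bot_iff]
    rintro x ⟨hx1, hx2⟩
    obtain ⟨r, rfl⟩ := Ideal.mem_span_singleton'.mp hx2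
    rw [Ideal.mem_bot]
    apply eq_zero_of_forall_minPrime
    intro P hP
    by_cases hiso : IsOpen ({(⟨⟨P, hP.1.1⟩, hP⟩ : MinSpec R)} : Set (MinSpec R))
    · -- isolated: not in U, so a ∈ P
      have hnotU : (⟨⟨P, hP.1.1⟩, hP⟩ : MinSpec R) ∉ U := by
        intro hmem
        have : (⟨⟨P, hP.1.1⟩, hP⟩ : MinSpec R) ∈
            U ∩ {Q : MinSpec R | IsOpen ({Q} : Set (MinSpec R))} := ⟨hmem, hiso⟩
        rw [hUiso] at this
        exact this
      have haP : a ∈ P := by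
        by_contra haP
        exact hnotU (by
          rw [← hVU]
          exact hvV ((PrimeSpectrum.mem_basicOpen a _).mpr haP))
      exact Ideal.mul_mem_left P r haP
    · have hPS : P ∈ S := ⟨⟨⟨P, hP.1.1⟩, hP⟩, hiso, rfl⟩
      exact Ideal.mem_sInf.mp hx1 hPS
  · -- backward
    intro hd S hS J hJ
    obtain ⟨a, haJ, ha0⟩ := Submodule.ne_bot_iff J |>.mp hJ
    have : ∃ P ∈ minimalPrimes R, a ∉ P := by
      by_contra hcon
      push_neg at hcon
      exact ha0 (eq_zero_of_forall_minPrime hcon)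
    obtain ⟨P0, hP0, haP0⟩ := this
    have hopen : IsOpen (Subtype.val ⁻¹'
        (PrimeSpectrum.basicOpen a : Set (PrimeSpectrum R)) : Set (MinSpec R)) :=
      PrimeSpectrum.isOpen_basicOpen.preimage continuous_subtype_val
    have hne : (Subtype.val ⁻¹'
        (PrimeSpectrum.basicOpen a : Set (PrimeSpectrum R)) : Set (MinSpec R)).Nonempty :=
      ⟨⟨⟨P0, hP0.1.1⟩, hP0⟩, (PrimeSpectrum.mem_basicOpen a _).mpr haP0⟩
    obtain ⟨Q, hQa, hQiso⟩ := hd.inter_open_nonempty _ hopen hne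
    have hQa' : a ∉ Q.1.asIdeal := (PrimeSpectrum.mem_basicOpen a Q.1).mp hQa
    obtain ⟨b, hbQ, hb⟩ := (isolated_iff Q).mp hQiso
    have hb0 : b ≠ 0 := fun h => hbQ (h ▸ Q.1.asIdeal.zero_mem)
    -- Q is not essential, so Q ∉ S
    have hQS : Q.1.asIdeal ∉ S := by
      intro hmem
      refine (hS _ hmem).2 (Ideal.span {b})
        (by simpa [Ideal.span_singleton_eq_bot] using hb0) ?_
      rw [eq_bot_iff]
      rintro x ⟨hx1, hx2⟩
      obtain ⟨r, rfl⟩ := Ideal.mem_span_singleton'.mp hx2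
      rw [Ideal.mem_bot]
      apply eq_zero_of_forall_minPrime
      intro P hP
      by_cases hPQ : P = Q.1.asIdeal
      · rw [hPQ]; exact hx1
      · have hbP : b ∈ P := by
          by_contra hbP
          exact hPQ (congrArg (fun Q : MinSpec R => Q.1.asIdeal)
            (hb ⟨⟨P, hP.1.1⟩, hP⟩ hbP))
        exact Ideal.mul_mem_left P r hbP
    intro hbot
    have hab : a * b ∈ sInf S ⊓ J := by
      constructor
      · refine Ideal.mem_sInf.mpr fun {P} hPS => ?_
        have hbP : b ∈ P := by
          by_contra hbP
          have heq := hb ⟨⟨P, (hS P hPS).1.1.1⟩, (hS P hPS).1⟩ hbP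
          have hPeq : P = Q.1.asIdeal := by
            simpa using congrArg (fun Q : MinSpec R => Q.1.asIdeal) heq
          exact hQS (hPeq ▸ hPS)
        exact Ideal.mul_mem_left P a hbP
      · exact Ideal.mul_mem_right b J haJ
    rw [hbot, Ideal.mem_bot] at hab
    rcases Q.1.2.mem_or_mem (hab ▸ Q.1.asIdeal.zero_mem) with h | h
    · exact hQa' h
    · exact hbQ h
end
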